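/- arXiv:1611.06035 — 10 statements merged into one kernel-verified Lean document; each statement's English description precedes it below -/
import Mathlib

section
/- The n-dimensional Moler matrix is positive definite, i.e., x^T A x > 0 for every nonzero vector x in R^n. -/
/-!
The Moler matrix factors as `A = Uᵀ U`, where `U` is unit upper triangular with every entry
above the diagonal equal to `-1`: the columns `i ≤ j` of `U` overlap in the `i` ones of the rows
`k < i`, plus the product `1 · (±1)` in row `i`. Since `det U = 1`, `U x ≠ 0` for `x ≠ 0`, and
`xᵀ A x = ‖U x‖² > 0`.
-/

open Matrix

noncomputable def molerMat (n : ℕ) : Matrix (Fin n) (Fin n) ℝ :=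
  fun i j => if i = j then ((i : ℕ) + 1 : ℝ) else (((min (i : ℕ) (j : ℕ) : ℝ) + 1) - 2)

variable {R : Type*} {n : ℕ}

def molerFactor (R : Type*) [Ring R] (n : ℕ) : Matrix (Fin n) (Fin n) R :=
  of fun i j => if i = j then 1 else if i < j then -1 else 0

lemma molerFactor_apply [Ring R] (i j : Fin n) :
    molerFactor R n i j = if i = j then 1 else if i < j then -1 else 0 :=
  rfl

lemma molerFactor_isUpperTriangular [Ring R] : (molerFactor R n).IsUpperTriangular := by
  intro i j (hji : j < i)
  simp [molerFactor_apply, hji.ne', hji.not_gt]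

lemma det_molerFactor [CommRing R] : (molerFactor R n).det = 1 := by
  simp [det_of_isUpperTriangular molerFactor_isUpperTriangular, molerFactor_apply]

lemma molerFactor_mulVec_injective [CommRing R] : Function.Injective (molerFactor R n).mulVec :=
  mulVec_injective_of_isUnit <| (isUnit_iff_isUnit_det _).mpr <| by simp [det_molerFactor]

lemma molerFactor_mul_molerFactor_of_le [Ring R] {i j : Fin n} (hij : i ≤ j) (k : Fin n) :
    molerFactor R n k i * molerFactor R n k j =
      (if k < i then 1 else 0) + if k = i then (if i = j then 1 else -1) else 0 := by
  rcases lt_trichotomy k i with hki | rfl | hik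
  · simp [molerFactor_apply, hki, hki.ne, hki.trans_le hij, (hki.trans_le hij).ne]
  · rcases hij.eq_or_lt with rfl | hlt
    · simp [molerFactor_apply]
    · simp [molerFactor_apply, hlt, hlt.ne]
  · simp [molerFactor_apply, hik.ne', hik.not_gt]

lemma transpose_molerFactor_mul_self_apply_of_le [Ring R] {i j : Fin n} (hij : i ≤ j) :
    ((molerFactor R n)ᵀ * molerFactor R n) i j = (i : ℕ) + if i = j then 1 else -1 := by
  simp only [mul_apply, transpose_apply, molerFactor_mul_molerFactor_of_le hij,
    Finset.sum_add_distrib, Finset.sum_boole, Finset.filter_gt_eq_Iio, Fin.card_Iio,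
    Finset.sum_ite_eq', Finset.mem_univ, if_true]

lemma transpose_molerFactor_mul_self : (molerFactor ℝ n)ᵀ * molerFactor ℝ n = molerMat n := by
  ext i j
  obtain rfl | hne := eq_or_ne i j
  · simp [transpose_molerFactor_mul_self_apply_of_le le_rfl, molerMat]
  rcases le_total i j with hij | hji
  · rw [transpose_molerFactor_mul_self_apply_of_le hij]
    simp [molerMat, hne, hij]
    ring
  · rw [← (isSymm_transpose_mul_self _).apply, transpose_molerFactor_mul_self_apply_of_le hji]
    simp [molerMat, hne, hne.symm, hji]
    ring

theorem moler_posDef (n : ℕ) (x : Fin n → ℝ) (hx : x ≠ 0) :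
    0 < x ⬝ᵥ (molerMat n).mulVec x := by
  rw [← transpose_molerFactor_mul_self]
  exact (PosDef.conjTranspose_mul_self _ molerFactor_mulVec_injective).dotProduct_mulVec_pos hx
end

section
/- For the n-dimensional Moler matrix A and the vector x = (1, 1/2, ..., 1/2^{n-1})^T, the Rayleigh quotient satisfies (x^T A x)/(x^T x) = 3n/(4^n - 1). -/
/-!
Peeling off the last row and column of the symmetric matrix, the quadratic form
`Qₙ = xᵀ A x` satisfies `Qₙ₊₁ = Qₙ + 2 (1/2)ⁿ ∑_{j<n} (j - 1) (1/2)ʲ + (n + 1) (1/4)ⁿ`, and the inner sum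
telescopes to `-2n (1/2)ⁿ`; hence `Qₙ = 4n (1/4)ⁿ`. The denominator `xᵀ x` is the geometric sum
`∑_{i<n} (1/4)ⁱ`.
-/

open Matrix

open Finset

section RangeSums

variable {R : Type*} [CommSemiring R] {n : ℕ}

theorem dotProduct_eq_sum_range (x y : ℕ → R) :
    (fun i : Fin n => x i) ⬝ᵥ (fun i : Fin n => y i) = ∑ i ∈ range n, x i * y i :=
  Fin.sum_univ_eq_sum_range (fun i => x i * y i) n

theorem dotProduct_mulVec_eq_sum_range (M : Matrix (Fin n) (Fin n) R) (a : ℕ → ℕ → R)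
    (hM : ∀ i j, M i j = a i j) (x : ℕ → R) :
    (fun i : Fin n => x i) ⬝ᵥ M *ᵥ (fun i : Fin n => x i) =
      ∑ i ∈ range n, ∑ j ∈ range n, x i * a i j * x j := by
  have hrow : ∀ i : Fin n, (M *ᵥ fun j : Fin n => x j) i = ∑ j ∈ range n, a i j * x j := fun i =>
    by simp only [mulVec, dotProduct, hM, Fin.sum_univ_eq_sum_range (fun j => a i j * x j)]
  simp only [dotProduct, hrow, mul_sum, ← mul_assoc]
  exact Fin.sum_univ_eq_sum_range (fun i => ∑ j ∈ range n, x i * a i j * x j) n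

theorem sum_range_succ_sum_range_succ_of_symm (f : ℕ → ℕ → R) (hf : ∀ i j, f i j = f j i)
    (n : ℕ) :
    ∑ i ∈ range (n + 1), ∑ j ∈ range (n + 1), f i j =
      ∑ i ∈ range n, ∑ j ∈ range n, f i j + 2 * ∑ j ∈ range n, f n j + f n n := by
  simp only [sum_range_succ, sum_add_distrib, hf _ n]
  ring

end RangeSums

/-- The paper's `A_{i+1,j+1}`: `molerMat` indexed from `0` and extended to all of `ℕ × ℕ`. -/
def molerEntry (i j : ℕ) : ℝ := if i = j then i + 1 else min i j - 1

theorem molerEntry_comm (i j : ℕ) : molerEntry i j = molerEntry j i := by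
  unfold molerEntry
  rcases eq_or_ne i j with rfl | h
  · rfl
  · rw [if_neg h, if_neg h.symm, min_comm]

theorem molerMat_apply {n : ℕ} (i j : Fin n) : molerMat n i j = molerEntry i j := by
  simp only [molerMat, molerEntry, Fin.ext_iff, Nat.cast_min]
  ring_nf

theorem sum_range_sub_one_mul_half_pow (n : ℕ) :
    ∑ j ∈ range n, ((j : ℝ) - 1) * (1 / 2) ^ j = -2 * n * (1 / 2) ^ n := by
  induction n with
  | zero => simp
  | succ n ih => rw [sum_range_succ, ih]; push_cast; ring

theorem sum_range_half_pow_mul_molerEntry (n : ℕ) :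
    ∑ j ∈ range n, (1 / 2 : ℝ) ^ n * molerEntry n j * (1 / 2) ^ j = -2 * n * (1 / 4) ^ n := by
  have hrow : ∀ j ∈ range n, (1 / 2 : ℝ) ^ n * molerEntry n j * (1 / 2) ^ j =
      (1 / 2) ^ n * (((j : ℝ) - 1) * (1 / 2) ^ j) := by
    intro j hj
    have hjn := mem_range.mp hj
    rw [molerEntry, if_neg hjn.ne', min_eq_right (by exact_mod_cast hjn.le)]
    ring
  rw [sum_congr rfl hrow, ← mul_sum, sum_range_sub_one_mul_half_pow,
    show (1 / 4 : ℝ) = 1 / 2 * (1 / 2) by norm_num, mul_pow]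
  ring

theorem sum_range_half_pow_mul_molerEntry_mul_half_pow (n : ℕ) :
    ∑ i ∈ range n, ∑ j ∈ range n, (1 / 2 : ℝ) ^ i * molerEntry i j * (1 / 2) ^ j =
      4 * n * (1 / 4) ^ n := by
  induction n with
  | zero => simp
  | succ n ih =>
    rw [sum_range_succ_sum_range_succ_of_symm _ (fun i j => by rw [molerEntry_comm]; ring), ih,
      sum_range_half_pow_mul_molerEntry, molerEntry, if_pos rfl]
    simp only [show (1 / 4 : ℝ) = 1 / 2 * (1 / 2) by norm_num, mul_pow]
    push_cast
    ring

theorem moler_rayleigh_general (n : ℕ) :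
    ((fun i : Fin n => (1 / 2 : ℝ) ^ (i : ℕ)) ⬝ᵥ
        (molerMat n).mulVec (fun i : Fin n => (1 / 2 : ℝ) ^ (i : ℕ))) /
      ((fun i : Fin n => (1 / 2 : ℝ) ^ (i : ℕ)) ⬝ᵥ (fun i : Fin n => (1 / 2 : ℝ) ^ (i : ℕ))) =
      3 * n / (4 ^ n - 1) := by
  have hden : (fun i : Fin n => (1 / 2 : ℝ) ^ (i : ℕ)) ⬝ᵥ (fun i : Fin n => (1 / 2 : ℝ) ^ (i : ℕ))
      = ∑ i ∈ range n, (1 / 4 : ℝ) ^ i := by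
    rw [dotProduct_eq_sum_range (fun i => (1 / 2 : ℝ) ^ i)]
    norm_num [← mul_pow]
  rw [dotProduct_mulVec_eq_sum_range _ _ molerMat_apply,
    sum_range_half_pow_mul_molerEntry_mul_half_pow, hden, geom_sum_eq (by norm_num),
    _root_.one_div_pow]
  rcases n.eq_zero_or_pos with rfl | hn
  · simp
  have h4 : (1 : ℝ) < 4 ^ n := one_lt_pow₀ (by norm_num) hn.ne'
  have : (4 : ℝ) ^ n - 1 ≠ 0 := by linarith
  have : (1 : ℝ) - 4 ^ n ≠ 0 := by linarith
  field_simp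
  ring

theorem moler_rayleigh (n : ℕ) (hn : 1 ≤ n) :
    ((fun i : Fin n => (1 / 2 : ℝ) ^ (i : ℕ)) ⬝ᵥ
        (molerMat n).mulVec (fun i : Fin n => (1 / 2 : ℝ) ^ (i : ℕ))) /
      ((fun i : Fin n => (1 / 2 : ℝ) ^ (i : ℕ)) ⬝ᵥ (fun i : Fin n => (1 / 2 : ℝ) ^ (i : ℕ))) =
      3 * n / (4 ^ n - 1) :=
  moler_rayleigh_general n
end

section
/- The smallest eigenvalue of the n-dimensional Moler matrix is positive, nonincreasing in n, and converges to 0 as n tends to infinity. -/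
open Matrix

/-- The smallest eigenvalue of the Moler matrix, as the minimum of the quadratic form on the
Euclidean unit sphere. -/
noncomputable def lamMin (n : ℕ) : ℝ :=
  sInf {r : ℝ | ∃ x : Fin n → ℝ, x ⬝ᵥ x = 1 ∧ r = x ⬝ᵥ (molerMat n).mulVec x}

/-! ### Auxiliary definitions -/

/-- Entries of the Cholesky-type factor of the Moler matrix. -/
noncomputable def uEnt (a b : ℕ) : ℝ := if a = b then 1 else if a < b then -1 else 0

noncomputable def Umat (n : ℕ) : Matrix (Fin n) (Fin n) ℝ := fun i j => uEnt i j

lemma uEnt_of_gt {a b : ℕ} (h : b < a) : uEnt a b = 0 := by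
  simp only [uEnt]
  rw [if_neg (by omega), if_neg (by omega)]

lemma uEnt_of_lt {a b : ℕ} (h : a < b) : uEnt a b = -1 := by
  simp only [uEnt]
  rw [if_neg (by omega), if_pos h]

lemma uEnt_self (a : ℕ) : uEnt a a = 1 := by simp [uEnt]

lemma sum_uEnt {n i j : ℕ} (hi : i < n) (hij : i ≤ j) :
    ∑ k ∈ Finset.range n, uEnt k i * uEnt k j
      = if i = j then (i : ℝ) + 1 else (i : ℝ) - 1 := by
  rw [← Finset.sum_range_add_sum_Ico _ (Nat.succ_le_of_lt hi)]
  have h2 : ∑ k ∈ Finset.Ico (i + 1) n, uEnt k i * uEnt k j = 0 :=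
    Finset.sum_eq_zero fun k hk => by
      rw [uEnt_of_gt (Finset.mem_Ico.mp hk).1, zero_mul]
  have h1 : ∑ k ∈ Finset.range i, uEnt k i * uEnt k j = (i : ℝ) := by
    rw [Finset.sum_congr rfl (fun k hk => ?_), Finset.sum_const, Finset.card_range,
      nsmul_eq_mul, mul_one]
    have hk' := Finset.mem_range.mp hk
    rw [uEnt_of_lt hk', uEnt_of_lt (lt_of_lt_of_le hk' hij)]
    norm_num
  rw [Finset.sum_range_succ, h1, h2, uEnt_self]
  rcases eq_or_lt_of_le hij with h | h
  · rw [if_pos h, h, uEnt_self]; ring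
  · rw [if_neg h.ne, uEnt_of_lt h]; ring

lemma moler_eq (n : ℕ) : molerMat n = (Umat n)ᵀ * Umat n := by
  ext i j
  rw [Matrix.mul_apply]
  have key : ∑ k : Fin n, (Umat n)ᵀ i k * Umat n k j
      = ∑ k ∈ Finset.range n, uEnt k (i : ℕ) * uEnt k (j : ℕ) := by
    rw [← Fin.sum_univ_eq_sum_range (fun k => uEnt k (i : ℕ) * uEnt k (j : ℕ)) n]
    rfl
  rw [key]
  rcases le_total (i : ℕ) (j : ℕ) with h | h
  · rw [sum_uEnt i.isLt h]
    simp only [molerMat, Fin.ext_iff]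
    rcases eq_or_ne (i : ℕ) (j : ℕ) with hij | hij
    · rw [if_pos hij, if_pos hij]
    · rw [if_neg hij, if_neg hij, min_eq_left (show ((i:ℕ):ℝ) ≤ ((j:ℕ):ℝ) from Nat.cast_le.mpr h)]; push_cast; ring
  · have comm : ∑ k ∈ Finset.range n, uEnt k (i : ℕ) * uEnt k (j : ℕ)
        = ∑ k ∈ Finset.range n, uEnt k (j : ℕ) * uEnt k (i : ℕ) := by
      exact Finset.sum_congr rfl fun k _ => mul_comm _ _
    rw [comm, sum_uEnt j.isLt h]
    simp only [molerMat, Fin.ext_iff]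
    rcases eq_or_ne (i : ℕ) (j : ℕ) with hij | hij
    · rw [if_pos hij, if_pos hij.symm, hij]
    · rw [if_neg hij, if_neg (Ne.symm hij), min_eq_right (show ((j:ℕ):ℝ) ≤ ((i:ℕ):ℝ) from Nat.cast_le.mpr h)]; push_cast; ring

lemma quad_eq (n : ℕ) (x : Fin n → ℝ) :
    x ⬝ᵥ (molerMat n).mulVec x = ((Umat n).mulVec x) ⬝ᵥ ((Umat n).mulVec x) := by
  rw [moler_eq, ← Matrix.mulVec_mulVec, Matrix.dotProduct_mulVec, Matrix.vecMul_transpose]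

lemma det_Umat (n : ℕ) : (Umat n).det = 1 := by
  rw [Matrix.det_of_upperTriangular (M := Umat n)
    (fun i j h => uEnt_of_gt (by exact_mod_cast h))]
  simp [Umat, uEnt_self]

/-- The set defining `lamMin`. -/
def Sset (n : ℕ) : Set ℝ :=
  {r : ℝ | ∃ x : Fin n → ℝ, x ⬝ᵥ x = 1 ∧ r = x ⬝ᵥ (molerMat n).mulVec x}

lemma lamMin_eq (n : ℕ) : lamMin n = sInf (Sset n) := rfl

lemma Sset_nonneg {n : ℕ} {r : ℝ} (hr : r ∈ Sset n) : 0 ≤ r := by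
  obtain ⟨x, -, rfl⟩ := hr
  rw [quad_eq]
  exact Finset.sum_nonneg fun i _ => mul_self_nonneg _

lemma Sset_bddBelow (n : ℕ) : BddBelow (Sset n) := ⟨0, fun r hr => Sset_nonneg hr⟩

lemma Sset_pos {n : ℕ} {r : ℝ} (hr : r ∈ Sset n) : 0 < r := by
  obtain ⟨x, hx, rfl⟩ := hr
  rw [quad_eq]
  rcases (Finset.sum_nonneg fun i (_ : i ∈ Finset.univ) =>
      mul_self_nonneg ((Umat n).mulVec x i)).lt_or_eq with h | h
  · exact h
  · exfalso
    have h0 : (Umat n).mulVec x = 0 := by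
      rw [← dotProduct_self_eq_zero (v := (Umat n).mulVec x)]
      exact h.symm
    have hx0 : x = 0 := Matrix.eq_zero_of_mulVec_eq_zero (by rw [det_Umat]; norm_num) h0
    rw [hx0] at hx
    simp [dotProduct] at hx

lemma Sset_nonempty {n : ℕ} (hn : 1 ≤ n) : (Sset n).Nonempty := by
  set x : Fin n → ℝ := Pi.single (⟨0, hn⟩ : Fin n) 1 with hxdef
  refine ⟨x ⬝ᵥ (molerMat n).mulVec x, x, ?_, rfl⟩
  simp [hxdef, dotProduct, Pi.single_apply]

lemma sphere_compact (n : ℕ) :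
    IsCompact {x : Fin n → ℝ | x ⬝ᵥ x = 1} := by
  apply Metric.isCompact_of_isClosed_isBounded
  · exact isClosed_eq (continuous_id.dotProduct continuous_id) continuous_const
  · apply (Metric.isBounded_closedBall (x := (0 : Fin n → ℝ)) (r := 1)).subset
    intro x hx
    simp only [Metric.mem_closedBall, dist_zero_right]
    rw [pi_norm_le_iff_of_nonneg zero_le_one]
    intro i
    rw [Real.norm_eq_abs, abs_le_one_iff_mul_self_le_one]
    calc x i * x i ≤ ∑ j, x j * x j :=
          Finset.single_le_sum (fun j _ => mul_self_nonneg (x j)) (Finset.mem_univ i)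
      _ = 1 := hx

lemma lamMin_pos {n : ℕ} (hn : 1 ≤ n) : 0 < lamMin n := by
  obtain ⟨x₀, hx₀, hmin⟩ := (sphere_compact n).exists_isMinOn
    (by obtain ⟨r, x, hx, -⟩ := Sset_nonempty hn; exact ⟨x, hx⟩)
    ((continuous_id.dotProduct
      (continuous_const.matrix_mulVec continuous_id)).continuousOn)
  have hmem : (x₀ ⬝ᵥ (molerMat n).mulVec x₀) ∈ Sset n := ⟨x₀, hx₀, rfl⟩
  have hle : x₀ ⬝ᵥ (molerMat n).mulVec x₀ ≤ lamMin n := by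
    rw [lamMin_eq]
    refine le_csInf (Sset_nonempty hn) ?_
    rintro r ⟨y, hy, rfl⟩
    exact hmin hy
  exact lt_of_lt_of_le (Sset_pos hmem) hle

lemma moler_castSucc (n : ℕ) (i j : Fin n) :
    molerMat (n + 1) i.castSucc j.castSucc = molerMat n i j := by
  simp only [molerMat, Fin.coe_castSucc, Fin.castSucc_inj]

lemma Sset_mono (n : ℕ) : Sset n ⊆ Sset (n + 1) := by
  rintro r ⟨x, hx, rfl⟩
  set y : Fin (n + 1) → ℝ := fun j => if h : (j : ℕ) < n then x ⟨j, h⟩ else 0 with hydef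
  have hcs : ∀ i : Fin n, y i.castSucc = x i := fun i => by
    simp [hydef, i.isLt]
  have hlast : y (Fin.last n) = 0 := by simp [hydef]
  have hyy : y ⬝ᵥ y = 1 := by
    rw [← hx]
    unfold dotProduct
    rw [Fin.sum_univ_castSucc]
    simp [hcs, hlast]
  refine ⟨y, hyy, ?_⟩
  unfold dotProduct Matrix.mulVec dotProduct
  rw [Fin.sum_univ_castSucc]
  simp only [hlast, zero_mul, add_zero]
  refine (Finset.sum_congr rfl fun i _ => ?_).symm
  rw [hcs, Fin.sum_univ_castSucc]
  simp only [hlast, mul_zero, add_zero]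
  congr 1
  refine Finset.sum_congr rfl fun j _ => ?_
  rw [moler_castSucc, hcs]

lemma lamMin_antitone {n : ℕ} (hn : 1 ≤ n) : lamMin (n + 1) ≤ lamMin n := by
  rw [lamMin_eq, lamMin_eq]
  exact csInf_le_csInf (Sset_bddBelow (n + 1)) (Sset_nonempty hn) (Sset_mono n)

lemma Umat_mulVec_geom {n : ℕ} (i : Fin n) :
    (Umat n).mulVec (fun j => (1 / 2 : ℝ) ^ (j : ℕ)) i = 2 * (1 / 2 : ℝ) ^ n := by
  have key : (Umat n).mulVec (fun j => (1 / 2 : ℝ) ^ (j : ℕ)) i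
      = ∑ k ∈ Finset.range n, uEnt (i : ℕ) k * (1 / 2 : ℝ) ^ k := by
    rw [← Fin.sum_univ_eq_sum_range (fun k => uEnt (i : ℕ) k * (1 / 2 : ℝ) ^ k) n]
    rfl
  rw [key, ← Finset.sum_range_add_sum_Ico _ (Nat.succ_le_of_lt i.isLt)]
  have h1 : ∑ k ∈ Finset.range ((i : ℕ) + 1), uEnt (i : ℕ) k * (1 / 2 : ℝ) ^ k
      = (1 / 2 : ℝ) ^ (i : ℕ) := by
    rw [Finset.sum_range_succ, Finset.sum_eq_zero fun k hk => by
      rw [uEnt_of_gt (Finset.mem_range.mp hk), zero_mul]]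
    rw [uEnt_self]; ring
  have h2 : ∑ k ∈ Finset.Ico ((i : ℕ) + 1) n, uEnt (i : ℕ) k * (1 / 2 : ℝ) ^ k
      = -(((1 / 2 : ℝ) ^ n - (1 / 2 : ℝ) ^ ((i : ℕ) + 1)) / ((1 / 2 : ℝ) - 1)) := by
    rw [← geom_sum_Ico (by norm_num : (1 / 2 : ℝ) ≠ 1) (Nat.succ_le_of_lt i.isLt),
      ← Finset.sum_neg_distrib]
    refine Finset.sum_congr rfl fun k hk => ?_
    rw [uEnt_of_lt (Finset.mem_Ico.mp hk).1]; ring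
  rw [h1, h2, pow_succ]
  field_simp
  ring

lemma lamMin_le_bound {n : ℕ} (hn : 1 ≤ n) :
    lamMin n ≤ 4 * n * (1 / 4 : ℝ) ^ n := by
  have hxdef : ∃ x : Fin n → ℝ, x = fun j : Fin n => (1 / 2 : ℝ) ^ (j : ℕ) := ⟨_, rfl⟩
  obtain ⟨x, hxdef⟩ := hxdef
  set c : ℝ := x ⬝ᵥ x with hcdef
  have hc1 : (1 : ℝ) ≤ c := by
    have h0 : (1 : ℝ) = x ⟨0, hn⟩ * x ⟨0, hn⟩ := by simp [hxdef]
    rw [hcdef, h0]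
    exact Finset.single_le_sum (fun j _ => mul_self_nonneg (x j)) (Finset.mem_univ _)
  have hc0 : (0 : ℝ) < c := lt_of_lt_of_le one_pos hc1
  have h4 : (2 * (1 / 2 : ℝ) ^ n) * (2 * (1 / 2 : ℝ) ^ n) = 4 * (1 / 4 : ℝ) ^ n := by
    rw [show (1 / 4 : ℝ) = (1 / 2) * (1 / 2) by norm_num, mul_pow]; ring
  have hQx : x ⬝ᵥ (molerMat n).mulVec x = n * (4 * (1 / 4 : ℝ) ^ n) := by
    rw [quad_eq, hxdef]
    unfold dotProduct
    have hterm : ∀ i : Fin n,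
        ((Umat n).mulVec (fun j => (1 / 2 : ℝ) ^ (j : ℕ)) i) *
          ((Umat n).mulVec (fun j => (1 / 2 : ℝ) ^ (j : ℕ)) i) = 4 * (1 / 4 : ℝ) ^ n :=
      fun i => by rw [Umat_mulVec_geom i, h4]
    rw [Finset.sum_congr rfl fun i _ => hterm i, Finset.sum_const, Finset.card_univ,
      Fintype.card_fin, nsmul_eq_mul]
  set t : ℝ := (Real.sqrt c)⁻¹ with htdef
  have hts : t * t * c = 1 := by
    rw [htdef, ← mul_inv, Real.mul_self_sqrt hc0.le]
    exact inv_mul_cancel₀ hc0.ne'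
  set y : Fin n → ℝ := t • x with hydef
  have hyy : y ⬝ᵥ y = 1 := by
    rw [hydef, smul_dotProduct, dotProduct_smul, smul_eq_mul, smul_eq_mul, ← hcdef,
      ← mul_assoc, hts]
  have hQy : y ⬝ᵥ (molerMat n).mulVec y = (t * t) * (x ⬝ᵥ (molerMat n).mulVec x) := by
    rw [hydef, Matrix.mulVec_smul, smul_dotProduct, dotProduct_smul, smul_eq_mul,
      smul_eq_mul, mul_assoc]
  have hmem : y ⬝ᵥ (molerMat n).mulVec y ∈ Sset n := ⟨y, hyy, rfl⟩
  have hle : lamMin n ≤ y ⬝ᵥ (molerMat n).mulVec y := by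
    rw [lamMin_eq]; exact csInf_le (Sset_bddBelow n) hmem
  have htt1 : t * t ≤ 1 := by
    nlinarith [hts, hc1, mul_self_nonneg t]
  calc lamMin n ≤ (t * t) * (x ⬝ᵥ (molerMat n).mulVec x) := by rw [← hQy]; exact hle
    _ ≤ 1 * (x ⬝ᵥ (molerMat n).mulVec x) := by
        apply mul_le_mul_of_nonneg_right htt1
        rw [hQx]; positivity
    _ = 4 * n * (1 / 4 : ℝ) ^ n := by rw [one_mul, hQx]; ring

theorem moler_lamMin_pos_antitone_tendsto_zero :
    (∀ n : ℕ, 1 ≤ n → 0 < lamMin n) ∧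
    (∀ n : ℕ, 1 ≤ n → lamMin (n + 1) ≤ lamMin n) ∧
    Filter.Tendsto lamMin Filter.atTop (nhds 0) := by
  refine ⟨fun n hn => lamMin_pos hn, fun n hn => lamMin_antitone hn, ?_⟩
  have hub : Filter.Tendsto (fun n : ℕ => 4 * (n : ℝ) * (1 / 4 : ℝ) ^ n)
      Filter.atTop (nhds 0) := by
    have h := (tendsto_pow_const_mul_const_pow_of_abs_lt_one 1
      (by rw [abs_of_pos] <;> norm_num : |(1 / 4 : ℝ)| < 1)).const_mul (4 : ℝ)
    simpa [mul_assoc] using h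
  refine tendsto_of_tendsto_of_tendsto_of_le_of_le' tendsto_const_nhds hub ?_ ?_
  · filter_upwards [Filter.eventually_ge_atTop 1] with n hn
    exact (lamMin_pos hn).le
  · filter_upwards [Filter.eventually_ge_atTop 1] with n hn
    exact lamMin_le_bound hn
end

section
/- An even-order symmetric tensor A of order m and dimension n is positive semi-definite if and only if all of its H-eigenvalues are nonnegative, where λ is an H-eigenvalue if A x^{m-1} = λ x^{[m-1]} for some nonzero x ∈ R^n. -/
/-!
Write `f x = A x^m` and `g x = ∑ i, x i ^ m`. One direction is the identity
`A x^m = ∑ i, x i (A x^{m-1})_i = λ g x` for an H-eigenpair, with `g x > 0` for `x ≠ 0` (`m` even).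
Conversely, `f` and `g` are both `m`-homogeneous and `g` is positive off `0`, so the minimum `μ`
of `f / g` on the unit sphere gives `μ g ≤ f` everywhere, with equality at the minimiser `x₀`.
Hence `x₀` is an unconstrained minimiser of `f - μ g`, and since `A` is symmetric the gradient
of `f` is `m A x^{m-1}`; Fermat's rule then makes `(μ, x₀)` an H-eigenpair, so `μ ≥ 0` and
`f ≥ μ g ≥ 0`.
-/

/-- Prepend an index `i` to a tuple of `m - 1` indices, giving a tuple of `m` indices. -/
def consIdx {n m : ℕ} (i : Fin n) (idx : Fin (m - 1) → Fin n) : Fin m → Fin n :=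
  fun k => if h : (k : ℕ) = 0 then i else idx ⟨(k : ℕ) - 1, by have := k.isLt; omega⟩

open Finset Metric

theorem exists_ne_zero_forall_mul_le_of_homogeneous {E : Type*} [NormedAddCommGroup E]
    [NormedSpace ℝ E] [FiniteDimensional ℝ E] [Nontrivial E] {f g : E → ℝ} {m : ℕ} (hm : m ≠ 0)
    (hf : Continuous f) (hg : Continuous g) (hfm : ∀ (c : ℝ) x, f (c • x) = c ^ m * f x)
    (hgm : ∀ (c : ℝ) x, g (c • x) = c ^ m * g x) (hg_pos : ∀ x ≠ 0, 0 < g x) :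
    ∃ x₀ ≠ 0, ∃ μ : ℝ, f x₀ = μ * g x₀ ∧ ∀ y, μ * g y ≤ f y := by
  have hg_ne : ∀ x ∈ sphere (0 : E) 1, g x ≠ 0 := fun x hx =>
    (hg_pos x (ne_zero_of_mem_unit_sphere ⟨x, hx⟩)).ne'
  obtain ⟨x₀, hx₀, hmin⟩ := (isCompact_sphere (0 : E) 1).exists_isMinOn
    (NormedSpace.sphere_nonempty.2 zero_le_one) (hf.continuousOn.div hg.continuousOn hg_ne)
  refine ⟨x₀, ne_zero_of_mem_unit_sphere ⟨x₀, hx₀⟩, f x₀ / g x₀,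
    (div_mul_cancel₀ _ (hg_ne x₀ hx₀)).symm, fun y => ?_⟩
  rcases eq_or_ne y 0 with rfl | hy
  · have hf0 : f 0 = 0 := by simpa [hm] using hfm 0 0
    have hg0 : g 0 = 0 := by simpa [hm] using hgm 0 0
    simp [hf0, hg0]
  · have hc : ‖y‖⁻¹ ^ m ≠ 0 := pow_ne_zero _ (inv_ne_zero (norm_ne_zero_iff.2 hy))
    have h := isMinOn_iff.1 hmin (‖y‖⁻¹ • y) (by simp [norm_smul, hy])
    rw [Pi.div_apply, Pi.div_apply, hfm, hgm, mul_div_mul_left _ _ hc] at h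
    exact (le_div_iff₀ (hg_pos y hy)).1 h

theorem Fin.sum_univ_pi_succ {α : Type*} [Fintype α] {p : ℕ} {M : Type*} [AddCommMonoid M]
    (F : (Fin (p + 1) → α) → M) :
    ∑ idx, F idx = ∑ i, ∑ t : Fin p → α, F (Fin.cons i t) := by
  rw [← Fintype.sum_prod_type']
  exact (Fintype.sum_equiv (Fin.consEquiv fun _ => α) _ _ fun _ => rfl).symm

theorem Fin.prod_univ_erase_zero {M : Type*} [CommMonoid M] {p : ℕ} (f : Fin (p + 1) → M) :
    ∏ j ∈ univ.erase 0, f j = ∏ j : Fin p, f j.succ := by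
  rw [Fin.univ_succ, erase_cons, prod_map]
  rfl

theorem consIdx_eq_cons {n p : ℕ} (i : Fin n) (idx : Fin p → Fin n) :
    consIdx (m := p + 1) i idx = Fin.cons i idx := by
  funext k
  cases k using Fin.cases <;> simp [consIdx]

namespace Tensor

variable {n p : ℕ}

-- `form A x` is `A x^m` and `apply A x` is `A x^{m-1}`; the order `m - 1` is written `p`.
noncomputable def form {m : ℕ} (A : (Fin m → Fin n) → ℝ) (x : Fin n → ℝ) : ℝ :=
  ∑ idx, A idx * ∏ k, x (idx k)

noncomputable def apply (A : (Fin (p + 1) → Fin n) → ℝ) (x : Fin n → ℝ) (i : Fin n) : ℝ :=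
  ∑ idx : Fin p → Fin n, A (Fin.cons i idx) * ∏ k, x (idx k)

def IsSymm {m : ℕ} (A : (Fin m → Fin n) → ℝ) : Prop :=
  ∀ (σ : Equiv.Perm (Fin m)) (idx : Fin m → Fin n), A (idx ∘ σ) = A idx

theorem form_eq_sum_mul_apply (A : (Fin (p + 1) → Fin n) → ℝ) (x : Fin n → ℝ) :
    form A x = ∑ i, x i * apply A x i := by
  simp only [form, apply, Fin.sum_univ_pi_succ, Fin.prod_univ_succ, Fin.cons_zero, Fin.cons_succ,
    mul_sum]
  exact sum_congr rfl fun _ _ => sum_congr rfl fun _ _ => by ring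

theorem form_smul {m : ℕ} (A : (Fin m → Fin n) → ℝ) (c : ℝ) (x : Fin n → ℝ) :
    form A (c • x) = c ^ m * form A x := by
  simp only [form, mul_sum, Pi.smul_apply, smul_eq_mul, prod_mul_distrib, prod_const, card_univ,
    Fintype.card_fin]
  exact sum_congr rfl fun _ _ => by ring

theorem continuous_form {m : ℕ} (A : (Fin m → Fin n) → ℝ) : Continuous (form A) := by
  unfold form; fun_prop

theorem form_zero {m : ℕ} (hm : m ≠ 0) (A : (Fin m → Fin n) → ℝ) : form A 0 = 0 := by
  simpa [hm] using form_smul A 0 0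

noncomputable def powSum (m : ℕ) (x : Fin n → ℝ) : ℝ := ∑ i, x i ^ m

theorem powSum_smul (m : ℕ) (c : ℝ) (x : Fin n → ℝ) : powSum m (c • x) = c ^ m * powSum m x := by
  simp only [powSum, mul_sum, Pi.smul_apply, smul_eq_mul, mul_pow]

theorem continuous_powSum (m : ℕ) : Continuous (powSum (n := n) m) := by
  unfold powSum; fun_prop

theorem powSum_pos {m : ℕ} (hm : Even m) {x : Fin n → ℝ} (hx : x ≠ 0) : 0 < powSum m x := by
  obtain ⟨i, hi⟩ := Function.ne_iff.1 hx
  exact sum_pos' (fun j _ => hm.pow_nonneg _) ⟨i, mem_univ i, hm.pow_pos hi⟩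

theorem form_eq_mul_powSum {A : (Fin (p + 1) → Fin n) → ℝ} {x : Fin n → ℝ} {μ : ℝ}
    (h : ∀ i, apply A x i = μ * x i ^ p) : form A x = μ * powSum (p + 1) x := by
  simp only [form_eq_sum_mul_apply, h, powSum, mul_sum, pow_succ]
  exact sum_congr rfl fun _ _ => by ring

theorem IsSymm.sum_mul_comp_perm {m : ℕ} {A : (Fin m → Fin n) → ℝ} (hA : IsSymm A)
    (F : (Fin m → Fin n) → ℝ) (σ : Equiv.Perm (Fin m)) :
    ∑ idx, A idx * F (idx ∘ σ) = ∑ idx, A idx * F idx :=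
  Fintype.sum_equiv (Equiv.arrowCongr σ.symm (Equiv.refl _)) _ _ fun idx => by
    simp [Equiv.arrowCongr, Function.comp_def, ← hA σ idx]

theorem IsSymm.sum_mul_prod_erase {A : (Fin (p + 1) → Fin n) → ℝ} (hA : IsSymm A)
    (x v : Fin n → ℝ) (k : Fin (p + 1)) :
    ∑ idx, A idx * ((∏ j ∈ univ.erase k, x (idx j)) * v (idx k)) = ∑ i, v i * apply A x i := by
  -- Swapping slots `0` and `k` moves the differentiated slot to the front; symmetry absorbs it.
  set F : (Fin (p + 1) → Fin n) → ℝ := fun idx => (∏ j ∈ univ.erase 0, x (idx j)) * v (idx 0)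
  have hk (idx : Fin (p + 1) → Fin n) :
      (∏ j ∈ univ.erase k, x (idx j)) * v (idx k) = F (idx ∘ Equiv.swap 0 k) := by
    simp only [F, Function.comp_apply, Equiv.swap_apply_left]
    rw [prod_equiv (Equiv.swap 0 k) (t := univ.erase k) (g := fun j => x (idx j))
      (by simp [Equiv.swap_apply_eq_iff]) (fun _ _ => rfl)]
  simp only [hk]
  rw [hA.sum_mul_comp_perm F]
  simp only [F, Fin.sum_univ_pi_succ, apply, Fin.prod_univ_erase_zero,
    Fin.cons_zero, Fin.cons_succ, mul_sum]
  exact sum_congr rfl fun _ _ => sum_congr rfl fun _ _ => by ring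

open ContinuousLinearMap in
theorem IsSymm.hasFDerivAt_form {A : (Fin (p + 1) → Fin n) → ℝ} (hA : IsSymm A) (x : Fin n → ℝ) :
    HasFDerivAt (form A)
      (((p : ℝ) + 1) • ∑ i, apply A x i • (proj i : (Fin n → ℝ) →L[ℝ] ℝ)) x := by
  have h : HasFDerivAt (form A) (∑ idx, A idx •
      ∑ k, (∏ j ∈ univ.erase k, x (idx j)) • (proj (idx k) : (Fin n → ℝ) →L[ℝ] ℝ)) x :=
    HasFDerivAt.fun_sum fun idx _ =>
      (HasFDerivAt.finsetProd fun k _ => hasFDerivAt_apply (𝕜 := ℝ) (idx k) x).const_mul (A idx)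
  refine h.congr_fderiv ?_
  ext v
  simp only [_root_.sum_apply, smul_apply, proj_apply, smul_eq_mul, mul_sum]
  rw [sum_comm]
  simp only [hA.sum_mul_prod_erase, mul_comm (v _), sum_const, card_univ, Fintype.card_fin,
    nsmul_eq_mul, mul_sum]
  push_cast
  rfl

open ContinuousLinearMap in
theorem hasFDerivAt_powSum (x : Fin n → ℝ) :
    HasFDerivAt (powSum (p + 1))
      (((p : ℝ) + 1) • ∑ i, x i ^ p • (proj i : (Fin n → ℝ) →L[ℝ] ℝ)) x := by
  rw [smul_sum]
  refine HasFDerivAt.fun_sum fun i _ => ?_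
  refine ((hasFDerivAt_apply (𝕜 := ℝ) i x).pow (p + 1)).congr_fderiv ?_
  rw [smul_smul, Nat.add_sub_cancel, nsmul_eq_mul]
  push_cast
  rfl

open ContinuousLinearMap in
theorem IsSymm.exists_apply_eq_forall_mul_powSum_le [Nontrivial (Fin n → ℝ)]
    {A : (Fin (p + 1) → Fin n) → ℝ} (hA : IsSymm A) (hp : Even (p + 1)) :
    ∃ x₀ ≠ 0, ∃ μ : ℝ, (∀ i, apply A x₀ i = μ * x₀ i ^ p) ∧
      ∀ y, μ * powSum (p + 1) y ≤ form A y := by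
  obtain ⟨x₀, hx₀, μ, hμ, hle⟩ := exists_ne_zero_forall_mul_le_of_homogeneous p.succ_ne_zero
    (continuous_form A) (continuous_powSum _) (form_smul A) (powSum_smul _)
    fun _ hx => powSum_pos hp hx
  refine ⟨x₀, hx₀, μ, fun i => ?_, hle⟩
  have hmin : IsLocalMin (fun y => form A y - μ * powSum (p + 1) y) x₀ :=
    Filter.Eventually.of_forall fun y => by linarith [hle y]
  have hgrad := hmin.hasFDerivAt_eq_zero
    ((hA.hasFDerivAt_form x₀).sub ((hasFDerivAt_powSum x₀).const_mul μ))
  have hi := congr($hgrad (Pi.single i 1))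
  simp only [sub_apply, smul_apply, _root_.sum_apply, proj_apply, Pi.single_apply, smul_eq_mul,
    mul_ite, mul_one, mul_zero, sum_ite_eq', mem_univ, if_true, zero_apply] at hi
  have hp1 : (p : ℝ) + 1 ≠ 0 := by positivity
  exact mul_left_cancel₀ hp1 (by linarith)

end Tensor

open Tensor in
theorem psd_iff_H_eigenvalues_nonneg (n m : ℕ) (hm0 : 0 < m) (hme : Even m)
    (A : (Fin m → Fin n) → ℝ)
    (hsym : ∀ (σ : Equiv.Perm (Fin m)) (idx : Fin m → Fin n), A (idx ∘ σ) = A idx) :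
    (∀ x : Fin n → ℝ, 0 ≤ ∑ idx : Fin m → Fin n, A idx * ∏ k, x (idx k)) ↔
      ∀ lam : ℝ,
        (∃ x : Fin n → ℝ, x ≠ 0 ∧ ∀ i : Fin n,
            (∑ idx : Fin (m - 1) → Fin n, A (consIdx i idx) * ∏ k, x (idx k)) =
              lam * x i ^ (m - 1)) →
        0 ≤ lam := by
  obtain ⟨p, rfl⟩ : ∃ p, m = p + 1 := ⟨m - 1, (Nat.succ_pred_eq_of_pos hm0).symm⟩
  simp only [Nat.add_sub_cancel, consIdx_eq_cons]
  change (∀ x, 0 ≤ form A x) ↔ ∀ lam, (∃ x, x ≠ 0 ∧ ∀ i, apply A x i = lam * x i ^ p) → 0 ≤ lam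
  constructor
  · rintro hpsd lam ⟨x, hx, heig⟩
    exact (mul_nonneg_iff_of_pos_right (powSum_pos hme hx)).1 (form_eq_mul_powSum heig ▸ hpsd x)
  · intro hev x
    obtain rfl | hx := eq_or_ne x 0
    · exact (form_zero p.succ_ne_zero A).ge
    have := nontrivial_of_ne x 0 hx
    obtain ⟨x₀, hx₀, μ, heig, hle⟩ := IsSymm.exists_apply_eq_forall_mul_powSum_le hsym hme
    exact (mul_nonneg (hev μ ⟨x₀, hx₀, heig⟩) (powSum_pos hme hx).le).trans (hle x)
end

section
/- The essential MO tensor A(n,m), defined by A_{i_1...i_m} = i_1 if i_1 = ··· = i_m and min{i_1,...,i_m} - 1 otherwise, admits the completely positive decomposition A(n,m) = Σ_{i=1}^n e_i^{⊗m} + Σ_{i=2}^n r_i^{⊗m}, where e_i is the i-th standard basis vector and r_i is the 0-1 vector with (r_i)_j = 1 iff j ≥ i. -/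
/-! With indices read 0-based and `a = min idx`, the product `∏ₖ (r_i)_{idx k}` is `1` exactly
when `1 ≤ i ≤ a`, so the `r_i` contribute `a`, which is the off-diagonal entry `min - 1` of the
1-based tensor; the `e_i` contribute `1` precisely on the diagonal. -/

/-- The essential MO tensor of order `m` and dimension `n` (1-based indices on `Fin n`):
entry `i₁` on the diagonal, `min{i₁,...,i_m} - 1` off the diagonal. -/
noncomputable def EssMO (n m : ℕ) (idx : Fin m → Fin n) : ℝ :=
  if ∀ k l, idx k = idx l then ((sInf (Set.range fun k => (idx k : ℕ) + 1)) : ℕ)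
  else (((sInf (Set.range fun k => (idx k : ℕ) + 1)) : ℕ) : ℝ) - 1

open Finset

section
variable {ι : Type*} [Fintype ι] [Nonempty ι] {n : ℕ}

theorem sInf_range_val_add_one (f : ι → Fin n) :
    sInf (Set.range fun k => (f k : ℕ) + 1) = ((univ.inf' univ_nonempty f : Fin n) : ℕ) + 1 := by
  rw [← Set.image_univ, ← coe_univ, ← inf'_eq_csInf_image _ univ_nonempty,
    apply_inf'_eq_inf'_comp univ_nonempty (fun x : Fin n => (x : ℕ) + 1)]
  · rfl
  · intro x y
    simp [Fin.coe_min]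

theorem sum_prod_ite_eq_ite_forall_eq {α R : Type*} [Fintype α] [DecidableEq α] [CommSemiring R]
    (f : ι → α) [Decidable (∀ k l, f k = f l)] :
    ∑ i, ∏ k, (if f k = i then (1 : R) else 0) = if ∀ k l, f k = f l then 1 else 0 := by
  obtain ⟨k₀⟩ := ‹Nonempty ι›
  have hconst (i : α) : (∀ k, f k = i) ↔ f k₀ = i ∧ ∀ k l, f k = f l :=
    ⟨fun h => ⟨h k₀, fun k l => (h k).trans (h l).symm⟩, fun h k => (h.2 k k₀).trans h.1⟩
  simp only [Fintype.prod_boole, hconst, ite_and, sum_ite_eq, mem_univ, if_true]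

theorem card_filter_one_le_and_le (a : Fin n) : #{i : Fin n | 1 ≤ (i : ℕ) ∧ i ≤ a} = a := by
  have hval : ({i : Fin n | 1 ≤ (i : ℕ) ∧ i ≤ a} : Finset _).map Fin.valEmbedding
      = Icc 1 (a : ℕ) := by
    ext j
    simp only [mem_map, mem_filter, mem_univ, true_and, Fin.valEmbedding_apply, mem_Icc,
      Fin.le_def]
    exact ⟨fun ⟨i, hi, hij⟩ => hij ▸ hi, fun hj => ⟨⟨j, hj.2.trans_lt a.isLt⟩, hj, rfl⟩⟩
  rw [← card_map, hval, Nat.card_Icc, Nat.add_sub_cancel]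

theorem sum_filter_one_le_prod_ite_le {R : Type*} [CommSemiring R] (f : ι → Fin n) :
    ∑ i ∈ univ.filter (fun i : Fin n => 1 ≤ (i : ℕ)), ∏ k, (if i ≤ f k then (1 : R) else 0)
      = ((univ.inf' univ_nonempty f : Fin n) : ℕ) := by
  have hle (i : Fin n) : (∀ k, i ≤ f k) ↔ i ≤ univ.inf' univ_nonempty f := by
    simp only [le_inf'_iff, mem_univ, true_implies]
  simp only [Fintype.prod_boole, hle, sum_boole, filter_filter, card_filter_one_le_and_le]
end

theorem essMO_eq_inf'_add (n m : ℕ) [Nonempty (Fin m)] (idx : Fin m → Fin n) :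
    EssMO n m idx =
      ((univ.inf' univ_nonempty idx : Fin n) : ℕ) + if ∀ k l, idx k = idx l then 1 else 0 := by
  rw [EssMO, sInf_range_val_add_one]
  split_ifs <;> push_cast <;> ring

theorem essMO_cp_decomposition_general (n m : ℕ) (hm : 0 < m) :
    ∀ idx : Fin m → Fin n,
      EssMO n m idx =
        (∑ i : Fin n, ∏ k, (if idx k = i then (1 : ℝ) else 0)) +
          ∑ i ∈ Finset.univ.filter (fun i : Fin n => 1 ≤ (i : ℕ)),
            ∏ k, (if i ≤ idx k then (1 : ℝ) else 0) := by
  have : Nonempty (Fin m) := Fin.pos_iff_nonempty.mp hm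
  intro idx
  rw [essMO_eq_inf'_add, sum_prod_ite_eq_ite_forall_eq, sum_filter_one_le_prod_ite_le, add_comm]

theorem essMO_cp_decomposition (n m : ℕ) (hn : 0 < n) (hm : 0 < m) :
    ∀ idx : Fin m → Fin n,
      EssMO n m idx =
        (∑ i : Fin n, ∏ k, (if idx k = i then (1 : ℝ) else 0)) +
          ∑ i ∈ Finset.univ.filter (fun i : Fin n => 1 ≤ (i : ℕ)),
            ∏ k, (if i ≤ idx k then (1 : ℝ) else 0) :=
  essMO_cp_decomposition_general n m hm
end

section
/- For even m, the essential MO tensor A(n,m) (entries i_1 on the diagonal, min{i_1,...,i_m} - 1 off the diagonal) is positive definite: A(n,m) x^m > 0 for every nonzero x ∈ R^n. -/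
lemma essMO_min_eq_sum (n m : ℕ) (hm : 0 < m) (idx : Fin m → Fin n) :
    ((sInf (Set.range fun k => (idx k : ℕ) + 1) : ℕ) : ℝ) - 1
      = ∑ i : Fin n, if ∀ k, i < idx k then (1:ℝ) else 0 := by
  have hne : (Set.range fun k => (idx k : ℕ) + 1).Nonempty := ⟨_, ⟨⟨0, hm⟩, rfl⟩⟩
  obtain ⟨k0, hk0⟩ := Nat.sInf_mem hne
  have hle : ∀ k, idx k0 ≤ idx k := by
    intro k
    have h1 := Nat.sInf_le (Set.mem_range_self (f := fun k => (idx k : ℕ) + 1) k)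
    simp only at hk0
    have : (idx k0 : ℕ) ≤ (idx k : ℕ) := by omega
    exact this
  have hcond : ∀ i : Fin n, (∀ k, i < idx k) ↔ i < idx k0 := fun i =>
    ⟨fun h => h k0, fun h k => lt_of_lt_of_le h (hle k)⟩
  have hfil : (Finset.univ.filter (fun i : Fin n => ∀ k, i < idx k)) = Finset.Iio (idx k0) := by
    ext i
    simp [hcond i]
  rw [Finset.sum_boole, hfil, Fin.card_Iio]
  simp only at hk0
  rw [← hk0]
  push_cast
  ring

theorem essMO_posDef (n m : ℕ) (hm0 : 0 < m) (hme : Even m)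
    (x : Fin n → ℝ) (hx : x ≠ 0) :
    0 < ∑ idx : Fin m → Fin n, EssMO n m idx * ∏ k, x (idx k) := by
  have key : ∀ idx : Fin m → Fin n, EssMO n m idx =
      (∑ i : Fin n, if ∀ k, i < idx k then (1:ℝ) else 0)
      + (if ∀ k l, idx k = idx l then (1:ℝ) else 0) := by
    intro idx
    rw [← essMO_min_eq_sum n m hm0 idx]
    unfold EssMO
    split <;> ring
  have hsplit : ∑ idx : Fin m → Fin n, EssMO n m idx * ∏ k, x (idx k)
      = (∑ i : Fin n, ∑ idx : Fin m → Fin n,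
          if ∀ k, i < idx k then ∏ k, x (idx k) else 0)
        + ∑ idx : Fin m → Fin n,
            if ∀ k l, idx k = idx l then ∏ k, x (idx k) else 0 := by
    simp only [key, add_mul, Finset.sum_add_distrib, Finset.sum_mul, ite_mul, one_mul,
      zero_mul]
    rw [Finset.sum_comm]
  have hfirst : ∀ i : Fin n,
      (∑ idx : Fin m → Fin n, if ∀ k, i < idx k then ∏ k, x (idx k) else 0)
        = (∑ j ∈ Finset.Ioi i, x j) ^ m := by
    intro i
    have : ((∑ j ∈ Finset.Ioi i, x j) ^ m)
        = ∏ _k : Fin m, ∑ j ∈ Finset.Ioi i, x j := by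
      rw [Finset.prod_const, Finset.card_univ, Fintype.card_fin]
    rw [this, Finset.prod_univ_sum]
    rw [← Finset.sum_filter]
    apply Finset.sum_congr
    · ext idx
      simp [Fintype.mem_piFinset, Finset.mem_Ioi]
    · intros; rfl
  have hsecond : (∑ idx : Fin m → Fin n,
      if ∀ k l, idx k = idx l then ∏ k, x (idx k) else 0)
        = ∑ i : Fin n, x i ^ m := by
    rw [← Finset.sum_filter]
    apply Finset.sum_nbij' (fun idx => idx ⟨0, hm0⟩) (fun i => fun _ => i)
    · intro idx _; exact Finset.mem_univ _
    · intro i _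
      simp
    · intro idx hidx
      simp only [Finset.mem_filter] at hidx
      funext k
      exact (hidx.2 k ⟨0, hm0⟩).symm
    · intro i _; rfl
    · intro idx hidx
      simp only [Finset.mem_filter] at hidx
      have : ∀ k, idx k = idx ⟨0, hm0⟩ := fun k => hidx.2 k ⟨0, hm0⟩
      calc ∏ k, x (idx k) = ∏ _k : Fin m, x (idx ⟨0, hm0⟩) := by
            apply Finset.prod_congr rfl
            intro k _; rw [this k]
        _ = x (idx ⟨0, hm0⟩) ^ m := by
            rw [Finset.prod_const, Finset.card_univ, Fintype.card_fin]
  rw [hsplit, hsecond]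
  have h1 : 0 ≤ ∑ i : Fin n, ∑ idx : Fin m → Fin n,
      if ∀ k, i < idx k then ∏ k, x (idx k) else 0 := by
    apply Finset.sum_nonneg
    intro i _
    rw [hfirst i]
    exact hme.pow_nonneg _
  have h2 : 0 < ∑ i : Fin n, x i ^ m := by
    obtain ⟨i0, hi0⟩ : ∃ i, x i ≠ 0 := by
      by_contra h
      push_neg at h
      exact hx (funext h)
    exact Finset.sum_pos' (fun i _ => hme.pow_nonneg _)
      ⟨i0, Finset.mem_univ _, hme.pow_pos hi0⟩
  linarith
end

section
/- The tensor M(n,m) with entries M_{i_1...i_m} = i_1 if i_1=···=i_m and min{i_1,...,i_m} otherwise satisfies M(n,m) = Σ_{i=2}^n r_i^{⊗m} + e^{⊗m}, where r_i is the 0-1 vector with ones in positions j ≥ i and e is the all-ones vector. -/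
/-- The tensor `M(n,m)`: entry `i₁` on the diagonal and `min{i₁,...,i_m}` off the diagonal
(these agree, both equal `min{i₁,...,i_m}`), with 1-based indices on `Fin n`. -/
noncomputable def Mten (n m : ℕ) (idx : Fin m → Fin n) : ℝ :=
  ((sInf (Set.range fun k => (idx k : ℕ) + 1)) : ℕ)

theorem Mten_decomposition (n m : ℕ) (hm : 0 < m) :
    ∀ idx : Fin m → Fin n,
      Mten n m idx =
        (∑ i ∈ Finset.univ.filter (fun i : Fin n => 1 ≤ (i : ℕ)),
            ∏ k, (if i ≤ idx k then (1 : ℝ) else 0)) +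
          ∏ _k : Fin m, (1 : ℝ) := by
  intro idx
  haveI : Nonempty (Fin m) := ⟨⟨0, hm⟩⟩
  obtain ⟨k0, -, hk0⟩ := Finset.exists_min_image Finset.univ idx ⟨⟨0, hm⟩, Finset.mem_univ _⟩
  set a : ℕ := (idx k0 : ℕ) with ha
  have han : a < n := (idx k0).isLt
  have hinf : sInf (Set.range fun k => (idx k : ℕ) + 1) = a + 1 := by
    apply le_antisymm
    · exact Nat.sInf_le ⟨k0, rfl⟩
    · apply le_csInf (Set.range_nonempty _)
      rintro b ⟨k, rfl⟩
      exact Nat.succ_le_succ (hk0 k (Finset.mem_univ k))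
  have hprod : ∀ i : Fin n, (∏ k, (if i ≤ idx k then (1 : ℝ) else 0)) =
      if (i : ℕ) ≤ a then 1 else 0 := by
    intro i
    by_cases h : (i : ℕ) ≤ a
    · have : ∀ k, i ≤ idx k := fun k => Fin.le_def.mpr (h.trans (hk0 k (Finset.mem_univ k)))
      simp [this, h]
    · have : ¬ i ≤ idx k0 := fun hle => h (Fin.le_def.mp hle)
      rw [if_neg h]
      exact Finset.prod_eq_zero (Finset.mem_univ k0) (if_neg this)
  have hsum : (∑ i ∈ Finset.univ.filter (fun i : Fin n => 1 ≤ (i : ℕ)),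
      ∏ k, (if i ≤ idx k then (1 : ℝ) else 0)) = (a : ℝ) := by
    rw [Finset.sum_filter]
    simp only [hprod]
    have : ∀ i : Fin n, (if 1 ≤ (i : ℕ) then (if (i : ℕ) ≤ a then (1:ℝ) else 0) else 0)
        = if 1 ≤ (i : ℕ) ∧ (i : ℕ) ≤ a then (1:ℝ) else 0 := by
      intro i
      by_cases h1 : 1 ≤ (i : ℕ) <;> by_cases h2 : (i : ℕ) ≤ a <;> simp [h1, h2]
    simp only [this]
    rw [Fin.sum_univ_eq_sum_range (fun j => if 1 ≤ j ∧ j ≤ a then (1:ℝ) else 0) n]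
    rw [← Finset.sum_filter]
    have hset : (Finset.range n).filter (fun j => 1 ≤ j ∧ j ≤ a) = Finset.Icc 1 a := by
      ext j
      simp only [Finset.mem_filter, Finset.mem_range, Finset.mem_Icc]
      omega
    rw [hset]
    simp [Nat.card_Icc]
  rw [Mten, hinf, hsum]
  push_cast
  simp
end

section
/- For every α ∈ [0,1] and all n, m, the tensor M(n,m) - α N(n,m) is completely positive; explicitly M(n,m) - α N(n,m) = Σ_{i=2}^n r_i^{⊗m} + (1-α) e^{⊗m} + α Σ_{i=1}^n e_i^{⊗m}. -/
noncomputable def Nten (n m : ℕ) (idx : Fin m → Fin n) : ℝ :=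
  if ∀ k l, idx k = idx l then 0 else 1

lemma card_aux (n : ℕ) (j : Fin n) :
    (Finset.univ.filter fun i : Fin n => 1 ≤ (i:ℕ) ∧ i ≤ j).card = (j:ℕ) := by
  have : (Finset.univ.filter fun i : Fin n => 1 ≤ (i:ℕ) ∧ i ≤ j).card
      = (Finset.Icc 1 (j:ℕ)).card := by
    refine Finset.card_bij' (fun i _ => (i:ℕ))
      (fun a ha => ⟨a, lt_of_le_of_lt (Finset.mem_Icc.1 ha).2 j.isLt⟩) ?_ ?_ ?_ ?_
    · intro i hi
      simp only [Finset.mem_filter] at hi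
      simp [Finset.mem_Icc, hi.2.1, Fin.le_def.1 hi.2.2]
    · intro a ha
      have ha' := Finset.mem_Icc.1 ha
      exact Finset.mem_filter.2 ⟨Finset.mem_univ _, ha'.1, Fin.le_def.2 ha'.2⟩
    · intro i hi; simp
    · intro a ha; simp
  rw [this, Nat.card_Icc]; omega

lemma key_lemma (n m : ℕ) (hm : 0 < m) (α : ℝ) (idx : Fin m → Fin n) :
    Mten n m idx - α * Nten n m idx =
      (∑ i ∈ Finset.univ.filter (fun i : Fin n => 1 ≤ (i : ℕ)),
          ∏ k, (if i ≤ idx k then (1 : ℝ) else 0)) +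
        (1 - α) * ∏ _k : Fin m, (1 : ℝ) +
        α * ∑ i : Fin n, ∏ k, (if idx k = i then (1 : ℝ) else 0) := by
  have hne : Nonempty (Fin m) := ⟨⟨0, hm⟩⟩
  obtain ⟨k0, -, hk0⟩ := Finset.exists_min_image Finset.univ idx ⟨⟨0, hm⟩, Finset.mem_univ _⟩
  set j := idx k0 with hj
  -- Mten value
  have hM : Mten n m idx = (j:ℕ) + 1 := by
    have : sInf (Set.range fun k => (idx k : ℕ) + 1) = (j:ℕ) + 1 := by
      refine le_antisymm (Nat.sInf_le ⟨k0, rfl⟩) (le_csInf ⟨_, ⟨k0, rfl⟩⟩ ?_)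
      rintro _ ⟨k, rfl⟩
      exact Nat.add_le_add_right (Fin.le_def.1 (hk0 k (Finset.mem_univ _))) 1
    rw [Mten, this]; push_cast; ring
  -- first sum
  have hS1 : (∑ i ∈ Finset.univ.filter (fun i : Fin n => 1 ≤ (i : ℕ)),
      ∏ k, (if i ≤ idx k then (1 : ℝ) else 0)) = ((j:ℕ) : ℝ) := by
    have hp : ∀ i : Fin n, (∏ k, (if i ≤ idx k then (1 : ℝ) else 0))
        = if i ≤ j then 1 else 0 := by
      intro i
      rw [Finset.prod_boole]
      congr 1
      simp only [eq_iff_iff]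
      constructor
      · intro h; exact h k0 (Finset.mem_univ _)
      · intro h k _; exact le_trans h (hk0 k (Finset.mem_univ _))
    simp only [hp]
    rw [Finset.sum_boole, Finset.filter_filter, ← card_aux n j]
  -- third sum
  have hS3 : (∑ i : Fin n, ∏ k, (if idx k = i then (1 : ℝ) else 0))
      = 1 - Nten n m idx := by
    have hp : ∀ i : Fin n, (∏ k, (if idx k = i then (1 : ℝ) else 0))
        = if ∀ k, idx k = i then 1 else 0 := by
      intro i
      rw [Finset.prod_boole]
      simp
    simp only [hp]
    rw [Nten]
    by_cases h : ∀ k l, idx k = idx l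
    · have : ∀ i : Fin n, (∀ k, idx k = i) ↔ i = j := by
        intro i
        constructor
        · intro hi; rw [← hi k0]
        · rintro rfl k; exact h k k0
      simp only [this]
      rw [if_pos h]; simp
    · rw [if_neg h]
      have : ∀ i : Fin n, ¬ (∀ k, idx k = i) := by
        intro i hi
        exact h (fun k l => (hi k).trans (hi l).symm)
      simp [this]
  rw [hM, hS1, hS3]
  simp only [Finset.prod_const_one]
  ring

theorem part2_aux (n m : ℕ) (hm : 0 < m)
    (α : ℝ) (h0 : 0 ≤ α) (h1 : α ≤ 1) :
    ∃ (r : ℕ) (u : Fin r → Fin n → ℝ), (∀ k j, 0 ≤ u k j) ∧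
      ∀ idx : Fin m → Fin n,
        Mten n m idx - α * Nten n m idx = ∑ k : Fin r, ∏ l, u k (idx l) := by
  set c1 : ℝ := (1 - α) ^ ((m:ℝ)⁻¹) with hc1
  set c2 : ℝ := α ^ ((m:ℝ)⁻¹) with hc2
  have hc1n : 0 ≤ c1 := Real.rpow_nonneg (by linarith) _
  have hc2n : 0 ≤ c2 := Real.rpow_nonneg h0 _
  have hm' : (m:ℝ) ≠ 0 := Nat.cast_ne_zero.2 hm.ne'
  have hc1m : c1 ^ m = 1 - α := by
    rw [hc1, ← Real.rpow_natCast _ m, ← Real.rpow_mul (by linarith),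
      inv_mul_cancel₀ hm', Real.rpow_one]
  have hc2m : c2 ^ m = α := by
    rw [hc2, ← Real.rpow_natCast _ m, ← Real.rpow_mul h0,
      inv_mul_cancel₀ hm', Real.rpow_one]
  set A : Fin n → Fin n → ℝ := fun i j => if 1 ≤ (i:ℕ) ∧ i ≤ j then 1 else 0 with hA
  set B : Fin 1 → Fin n → ℝ := fun _ _ => c1 with hB
  set C : Fin n → Fin n → ℝ := fun i j => if j = i then c2 else 0 with hC
  refine ⟨(n + 1) + n, Fin.append (Fin.append A B) C, ?_, ?_⟩
  · intro k j
    refine Fin.addCases (fun k => ?_) (fun k => ?_) k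
    · refine Fin.addCases (fun k => ?_) (fun k => ?_) k <;>
        simp only [Fin.append_left, Fin.append_right, hA, hB] <;> positivity
    · simp only [Fin.append_right, hC]; positivity
  · intro idx
    rw [key_lemma n m hm α idx]
    rw [Fin.sum_univ_add, Fin.sum_univ_add]
    simp only [Fin.append_left, Fin.append_right]
    congr 1
    · congr 1
      · -- A part
        rw [Finset.sum_filter]
        refine Finset.sum_congr rfl fun i _ => ?_
        by_cases hi : 1 ≤ (i:ℕ)
        · rw [if_pos hi]
          refine Finset.prod_congr rfl fun l _ => ?_
          simp [hA, hi]
        · rw [if_neg hi]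
          have : ∀ l : Fin m, A i (idx l) = 0 := fun l => by simp [hA, hi]
          simp only [this]
          rw [Finset.prod_const, Finset.card_univ, Fintype.card_fin, zero_pow hm.ne']
      · -- B part
        simp only [hB, Finset.prod_const, Finset.card_univ, Fintype.card_fin,
          Finset.sum_const, Finset.card_univ, Fintype.card_fin, one_smul, hc1m]
        simp
    · -- C part
      rw [Finset.mul_sum]
      refine Finset.sum_congr rfl fun i _ => ?_
      have : ∀ l : Fin m, C i (idx l) = c2 * (if idx l = i then 1 else 0) := by
        intro l; by_cases h : idx l = i <;> simp [hC, h]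
      simp only [this]
      rw [Finset.prod_mul_distrib, Finset.prod_const, Finset.card_univ,
        Fintype.card_fin, hc2m]

theorem M_sub_alpha_N_completely_positive (n m : ℕ) (hm : 0 < m)
    (α : ℝ) (h0 : 0 ≤ α) (h1 : α ≤ 1) :
    (∀ idx : Fin m → Fin n,
        Mten n m idx - α * Nten n m idx =
          (∑ i ∈ Finset.univ.filter (fun i : Fin n => 1 ≤ (i : ℕ)),
              ∏ k, (if i ≤ idx k then (1 : ℝ) else 0)) +
            (1 - α) * ∏ _k : Fin m, (1 : ℝ) +
            α * ∑ i : Fin n, ∏ k, (if idx k = i then (1 : ℝ) else 0)) ∧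
    ∃ (r : ℕ) (u : Fin r → Fin n → ℝ), (∀ k j, 0 ≤ u k j) ∧
      ∀ idx : Fin m → Fin n,
        Mten n m idx - α * Nten n m idx = ∑ k : Fin r, ∏ l, u k (idx l) := by
  exact ⟨fun idx => key_lemma n m hm α idx, part2_aux n m hm α h0 h1⟩
end

section
/- For even m ≥ 4 and n ≥ 2, with x = (1, 1/2, ..., 1/2^{n-1})^T, one has (M(n,m) - 2 N(n,m)) x^m ≤ 48/15 - (3/2)^m < 0; hence M(n,m) - 2N(n,m) is not positive semi-definite for even m ≥ 4. -/
open Finset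

private lemma geom_bound (r : ℝ) (h0 : 0 ≤ r) (h1 : r < 1) (N : ℕ) :
    ∑ i ∈ range N, r ^ i ≤ 1 / (1 - r) := by
  rw [le_div_iff₀ (by linarith)]
  have h := geom_sum_mul r N
  have hrN : 0 ≤ r ^ N := pow_nonneg h0 N
  nlinarith [h]

private lemma sum_prod_eq (n m : ℕ) (g : Fin n → ℝ) :
    ∑ idx : Fin m → Fin n, ∏ k, g (idx k) = (∑ j, g j) ^ m := by
  have h : (∑ j, g j) ^ m = ∏ _k : Fin m, (∑ j, g j) := by
    rw [Finset.prod_const, Finset.card_univ, Fintype.card_fin]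
  rw [h, Finset.prod_univ_sum]
  rw [Fintype.piFinset_univ]

private lemma Mten_eq (n m : ℕ) (hm : 0 < m) (idx : Fin m → Fin n) :
    Mten n m idx = ∑ i : Fin n, (if ∀ k, i ≤ idx k then (1:ℝ) else 0) := by
  have hne : (univ : Finset (Fin m)).Nonempty := ⟨⟨0, hm⟩, mem_univ _⟩
  set c := univ.inf' hne idx with hc
  have hmem : ∃ k, idx k = c := by
    obtain ⟨k, _, hk⟩ := Finset.exists_mem_eq_inf' hne idx
    exact ⟨k, hk.symm⟩
  have hle : ∀ k, c ≤ idx k := fun k => Finset.inf'_le idx (mem_univ k)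
  have hsinf : sInf (Set.range fun k => ((idx k : ℕ) + 1)) = (c : ℕ) + 1 := by
    apply le_antisymm
    · obtain ⟨k, hk⟩ := hmem
      exact Nat.sInf_le ⟨k, by simp [hk]⟩
    · apply le_csInf
      · obtain ⟨k, hk⟩ := hmem
        exact ⟨(idx k : ℕ) + 1, ⟨k, rfl⟩⟩
      · rintro x ⟨k, rfl⟩
        exact Nat.succ_le_succ (hle k)
  have hiff : ∀ i : Fin n, (∀ k, i ≤ idx k) ↔ i ≤ c := by
    intro i; constructor
    · intro h; exact Finset.le_inf' hne idx fun k _ => h k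
    · intro h k; exact le_trans h (hle k)
  simp_rw [hiff]
  rw [Mten, hsinf]
  have h1 : ∀ i : Fin n, (if i ≤ c then (1:ℝ) else 0)
      = (fun a : ℕ => if a ≤ (c : ℕ) then (1:ℝ) else 0) (i : ℕ) := by
    intro i
    show (if i ≤ c then (1:ℝ) else 0) = if (i : ℕ) ≤ (c : ℕ) then (1:ℝ) else 0
    by_cases hic : (i : ℕ) ≤ (c : ℕ)
    · rw [if_pos hic, if_pos (Fin.le_def.mpr hic)]
    · rw [if_neg hic, if_neg (fun hh => hic (Fin.le_def.mp hh))]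
  simp_rw [h1]
  rw [Fin.sum_univ_eq_sum_range (fun a : ℕ => if a ≤ (c : ℕ) then (1:ℝ) else 0) n]
  rw [Finset.sum_boole]
  have h2 : (range n).filter (fun a => a ≤ (c : ℕ)) = range ((c : ℕ) + 1) := by
    ext a
    simp only [mem_filter, mem_range]
    have := c.isLt
    omega
  rw [h2, Finset.card_range]

private lemma Nten_eq (n m : ℕ) (hm : 0 < m) (idx : Fin m → Fin n) :
    Nten n m idx = 1 - ∑ i : Fin n, (if ∀ k, idx k = i then (1:ℝ) else 0) := by
  rw [Nten]
  by_cases h : ∀ k l, idx k = idx l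
  · rw [if_pos h]
    have hiff : ∀ i : Fin n, (∀ k, idx k = i) ↔ i = idx ⟨0, hm⟩ := by
      intro i; constructor
      · intro h2; rw [← h2 ⟨0, hm⟩]
      · rintro rfl k; exact h k _
    simp_rw [hiff]
    rw [Finset.sum_ite_eq' univ (idx ⟨0, hm⟩) (fun _ => (1:ℝ))]
    simp
  · rw [if_neg h]
    have h2 : ∀ i : Fin n, ¬ (∀ k, idx k = i) := by
      intro i hi; exact h (fun k l => (hi k).trans (hi l).symm)
    simp [h2]

theorem M_sub_two_N_not_psd (n m : ℕ) (hm : 4 ≤ m) (hme : Even m) (hn : 2 ≤ n) :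
    (∑ idx : Fin m → Fin n, (Mten n m idx - 2 * Nten n m idx) *
        ∏ k, ((1 / 2 : ℝ)) ^ ((idx k : ℕ))) ≤ 48 / 15 - (3 / 2) ^ m ∧
    (48 / 15 : ℝ) - (3 / 2) ^ m < 0 ∧
    ¬ (∀ x : Fin n → ℝ,
        0 ≤ ∑ idx : Fin m → Fin n, (Mten n m idx - 2 * Nten n m idx) * ∏ k, x (idx k)) := by
  have hm1 : 0 < m := by omega
  set p : Fin n → ℝ := fun j => (1/2:ℝ) ^ (j : ℕ) with hp
  -- pointwise key identity
  have key : ∀ idx : Fin m → Fin n,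
      (Mten n m idx - 2 * Nten n m idx) * ∏ k, ((1 / 2 : ℝ)) ^ ((idx k : ℕ)) =
      (∑ i : Fin n, (if ∀ k, i ≤ idx k then (1:ℝ) else 0)) * ∏ k, p (idx k)
      + 2 * ((∑ i : Fin n, (if ∀ k, idx k = i then (1:ℝ) else 0)) * ∏ k, p (idx k))
      - 2 * ∏ k, p (idx k) := by
    intro idx
    rw [Mten_eq n m hm1 idx, Nten_eq n m hm1 idx]
    have hP : (∏ k, ((1 / 2 : ℝ)) ^ ((idx k : ℕ))) = ∏ k, p (idx k) := rfl
    rw [hP]; ring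
  -- three factorizations
  have h1 : ∑ idx : Fin m → Fin n,
      (∑ i : Fin n, (if ∀ k, i ≤ idx k then (1:ℝ) else 0)) * ∏ k, p (idx k)
      = ∑ i : Fin n, (∑ j : Fin n, if i ≤ j then p j else 0) ^ m := by
    simp_rw [Finset.sum_mul]
    rw [Finset.sum_comm]
    refine Finset.sum_congr rfl fun i _ => ?_
    rw [← sum_prod_eq n m (fun j => if i ≤ j then p j else 0)]
    refine Finset.sum_congr rfl fun idx _ => ?_
    have hterm : ∀ k : Fin m, (if i ≤ idx k then p (idx k) else 0)
        = (if i ≤ idx k then (1:ℝ) else 0) * p (idx k) := fun k => by split <;> simp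
    calc (if ∀ k, i ≤ idx k then (1:ℝ) else 0) * ∏ k, p (idx k)
        = (∏ k, if i ≤ idx k then (1:ℝ) else 0) * ∏ k, p (idx k) := by
          rw [Finset.prod_boole]; simp
      _ = ∏ k, ((if i ≤ idx k then (1:ℝ) else 0) * p (idx k)) := (Finset.prod_mul_distrib).symm
      _ = ∏ k, (if i ≤ idx k then p (idx k) else 0) := by
          exact Finset.prod_congr rfl fun k _ => (hterm k).symm
  have h2 : ∑ idx : Fin m → Fin n,
      (∑ i : Fin n, (if ∀ k, idx k = i then (1:ℝ) else 0)) * ∏ k, p (idx k)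
      = ∑ i : Fin n, (p i) ^ m := by
    simp_rw [Finset.sum_mul]
    rw [Finset.sum_comm]
    refine Finset.sum_congr rfl fun i _ => ?_
    have hsum : ∑ idx : Fin m → Fin n,
        (if ∀ k, idx k = i then (1:ℝ) else 0) * ∏ k, p (idx k)
        = (∑ j : Fin n, if j = i then p j else 0) ^ m := by
      rw [← sum_prod_eq n m (fun j => if j = i then p j else 0)]
      refine Finset.sum_congr rfl fun idx _ => ?_
      have hterm : ∀ k : Fin m, (if idx k = i then p (idx k) else 0)
          = (if idx k = i then (1:ℝ) else 0) * p (idx k) := fun k => by split <;> simp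
      calc (if ∀ k, idx k = i then (1:ℝ) else 0) * ∏ k, p (idx k)
          = (∏ k, if idx k = i then (1:ℝ) else 0) * ∏ k, p (idx k) := by
            rw [Finset.prod_boole]; simp
        _ = ∏ k, ((if idx k = i then (1:ℝ) else 0) * p (idx k)) := (Finset.prod_mul_distrib).symm
        _ = ∏ k, (if idx k = i then p (idx k) else 0) := by
            exact Finset.prod_congr rfl fun k _ => (hterm k).symm
    rw [hsum, Finset.sum_ite_eq' univ i p]
    simp
  have h3 : ∑ idx : Fin m → Fin n, ∏ k, p (idx k) = (∑ j : Fin n, p j) ^ m :=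
    sum_prod_eq n m p
  -- the expanded form
  have expand : (∑ idx : Fin m → Fin n, (Mten n m idx - 2 * Nten n m idx) *
        ∏ k, ((1 / 2 : ℝ)) ^ ((idx k : ℕ)))
      = ∑ i : Fin n, (∑ j : Fin n, if i ≤ j then p j else 0) ^ m
        + 2 * ∑ i : Fin n, (p i) ^ m
        - 2 * (∑ j : Fin n, p j) ^ m := by
    calc (∑ idx : Fin m → Fin n, (Mten n m idx - 2 * Nten n m idx) *
          ∏ k, ((1 / 2 : ℝ)) ^ ((idx k : ℕ)))
        = ∑ idx : Fin m → Fin n,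
            ((∑ i : Fin n, (if ∀ k, i ≤ idx k then (1:ℝ) else 0)) * ∏ k, p (idx k)
            + 2 * ((∑ i : Fin n, (if ∀ k, idx k = i then (1:ℝ) else 0)) * ∏ k, p (idx k))
            - 2 * ∏ k, p (idx k)) := Finset.sum_congr rfl fun idx _ => key idx
      _ = (∑ idx : Fin m → Fin n,
            (∑ i : Fin n, (if ∀ k, i ≤ idx k then (1:ℝ) else 0)) * ∏ k, p (idx k))
          + 2 * (∑ idx : Fin m → Fin n,
            (∑ i : Fin n, (if ∀ k, idx k = i then (1:ℝ) else 0)) * ∏ k, p (idx k))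
          - 2 * (∑ idx : Fin m → Fin n, ∏ k, p (idx k)) := by
          rw [Finset.sum_sub_distrib, Finset.sum_add_distrib, ← Finset.mul_sum, ← Finset.mul_sum]
      _ = _ := by rw [h1, h2, h3]
  -- convert to ℕ-indexed form
  set Q : ℕ → ℝ := fun a => ∑ j ∈ range n, if a ≤ j then (1/2:ℝ) ^ j else 0 with hQ
  have hqQ : ∀ i : Fin n, (∑ j : Fin n, if i ≤ j then p j else 0) = Q (i : ℕ) := by
    intro i
    have hQv : Q (i : ℕ) = ∑ j ∈ range n, if (i : ℕ) ≤ j then (1/2:ℝ) ^ j else 0 := rfl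
    rw [hQv,
      ← Fin.sum_univ_eq_sum_range (fun a : ℕ => if (i : ℕ) ≤ a then (1/2:ℝ) ^ a else 0) n]
    refine Finset.sum_congr rfl fun j _ => ?_
    show (if i ≤ j then p j else 0) = if (i : ℕ) ≤ (j : ℕ) then (1/2:ℝ) ^ (j : ℕ) else 0
    by_cases hij : (i : ℕ) ≤ (j : ℕ)
    · rw [if_pos hij, if_pos (Fin.le_def.mpr hij)]
    · rw [if_neg hij, if_neg (fun hh => hij (Fin.le_def.mp hh))]
  have hSq : ∑ i : Fin n, (∑ j : Fin n, if i ≤ j then p j else 0) ^ m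
      = ∑ i ∈ range n, (Q i) ^ m := by
    rw [← Fin.sum_univ_eq_sum_range (fun a : ℕ => (Q a) ^ m) n]
    exact Finset.sum_congr rfl fun i _ => by rw [hqQ i]
  have hQ0 : Q 0 = ∑ j ∈ range n, (1/2:ℝ) ^ j := by
    have hQv : Q 0 = ∑ j ∈ range n, if 0 ≤ j then (1/2:ℝ) ^ j else 0 := rfl
    rw [hQv]
    exact Finset.sum_congr rfl fun j _ => if_pos (Nat.zero_le j)
  have hfull : (∑ j : Fin n, p j) = Q 0 := by
    rw [hQ0, hp, ← Fin.sum_univ_eq_sum_range (fun a : ℕ => (1/2:ℝ) ^ a) n]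
  have hA : ∑ i : Fin n, (p i) ^ m = ∑ i ∈ range n, ((1/2:ℝ) ^ m) ^ i := by
    rw [← Fin.sum_univ_eq_sum_range (fun a : ℕ => ((1/2:ℝ) ^ m) ^ a) n]
    refine Finset.sum_congr rfl fun i _ => ?_
    rw [hp, ← pow_mul, ← pow_mul, Nat.mul_comm]
  -- bounds
  have hr0 : (0:ℝ) ≤ (1/2:ℝ) ^ m := by positivity
  have hr16 : (1/2:ℝ) ^ m ≤ 1/16 := by
    calc (1/2:ℝ) ^ m ≤ (1/2:ℝ) ^ 4 :=
          pow_le_pow_of_le_one (by norm_num) (by norm_num) hm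
      _ = 1/16 := by norm_num
  have hgeom16 : ∀ N : ℕ, ∑ i ∈ range N, ((1/2:ℝ) ^ m) ^ i ≤ 16/15 := by
    intro N
    calc ∑ i ∈ range N, ((1/2:ℝ) ^ m) ^ i
        ≤ 1 / (1 - (1/2:ℝ) ^ m) := geom_bound _ hr0 (by linarith) N
      _ ≤ 16/15 := by
          rw [div_le_div_iff₀ (by linarith) (by norm_num)]
          linarith
  have hQnonneg : ∀ a, 0 ≤ Q a := by
    intro a
    refine Finset.sum_nonneg fun j _ => ?_
    split <;> positivity
  have hQle : ∀ a, Q a ≤ 2 * (1/2:ℝ) ^ a := by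
    intro a
    have hfilt : (range n).filter (fun j => a ≤ j) = Ico a n := by
      ext j; simp only [mem_filter, mem_range, mem_Ico]; omega
    have : Q a = ∑ j ∈ Ico a n, (1/2:ℝ) ^ j := by
      have hQv : Q a = ∑ j ∈ range n, if a ≤ j then (1/2:ℝ) ^ j else 0 := rfl
      rw [hQv, ← hfilt, Finset.sum_filter]
    rw [this, Finset.sum_Ico_eq_sum_range]
    have hh : ∀ k ∈ range (n - a), (1/2:ℝ) ^ (a + k) = (1/2:ℝ) ^ a * (1/2:ℝ) ^ k :=
      fun k _ => pow_add _ _ _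
    rw [Finset.sum_congr rfl hh, ← Finset.mul_sum]
    have := geom_bound (1/2:ℝ) (by norm_num) (by norm_num) (n - a)
    have h2 : (1:ℝ) / (1 - 1/2) = 2 := by norm_num
    rw [h2] at this
    have hpa : (0:ℝ) ≤ (1/2:ℝ) ^ a := by positivity
    nlinarith
  have hQ0ge : (3/2:ℝ) ≤ Q 0 := by
    rw [hQ0]
    have hsub : range 2 ⊆ range n := Finset.range_subset_range.mpr hn
    have := Finset.sum_le_sum_of_subset_of_nonneg hsub
      (fun j _ _ => by positivity : ∀ j ∈ range n, j ∉ range 2 → (0:ℝ) ≤ (1/2:ℝ) ^ j)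
    have h2 : ∑ j ∈ range 2, (1/2:ℝ) ^ j = 3/2 := by
      rw [Finset.sum_range_succ, Finset.sum_range_succ]; norm_num
    linarith
  -- split off i = 0
  have hn1 : n = (n - 1) + 1 := by omega
  have hsplit : ∑ i ∈ range n, (Q i) ^ m
      = ∑ i ∈ range (n - 1), (Q (i + 1)) ^ m + (Q 0) ^ m := by
    conv_lhs => rw [hn1]
    exact Finset.sum_range_succ' (fun a => (Q a) ^ m) (n - 1)
  have htail : ∑ i ∈ range (n - 1), (Q (i + 1)) ^ m ≤ 16/15 := by
    calc ∑ i ∈ range (n - 1), (Q (i + 1)) ^ m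
        ≤ ∑ i ∈ range (n - 1), ((1/2:ℝ) ^ m) ^ i := by
          refine Finset.sum_le_sum fun i _ => ?_
          have hle : Q (i + 1) ≤ (1/2:ℝ) ^ i := by
            have := hQle (i + 1)
            have h2 : 2 * (1/2:ℝ) ^ (i + 1) = (1/2:ℝ) ^ i := by
              rw [pow_succ]; ring
            linarith
          calc (Q (i + 1)) ^ m ≤ ((1/2:ℝ) ^ i) ^ m :=
                pow_le_pow_left₀ (hQnonneg _) hle m
            _ = ((1/2:ℝ) ^ m) ^ i := by rw [← pow_mul, ← pow_mul, Nat.mul_comm]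
      _ ≤ 16/15 := hgeom16 _
  have hQ0m : (3/2:ℝ) ^ m ≤ (Q 0) ^ m := pow_le_pow_left₀ (by norm_num) hQ0ge m
  -- first conjunct
  have hfirst : (∑ idx : Fin m → Fin n, (Mten n m idx - 2 * Nten n m idx) *
        ∏ k, ((1 / 2 : ℝ)) ^ ((idx k : ℕ))) ≤ 48 / 15 - (3 / 2) ^ m := by
    rw [expand, hSq, hfull, hA, hsplit]
    have hAle := hgeom16 n
    linarith
  -- second conjunct
  have hsecond : (48 / 15 : ℝ) - (3 / 2) ^ m < 0 := by
    have h4 : (3/2:ℝ) ^ 4 ≤ (3/2:ℝ) ^ m := pow_le_pow_right₀ (by norm_num) hm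
    have : ((3:ℝ)/2) ^ 4 = 81/16 := by norm_num
    linarith
  refine ⟨hfirst, hsecond, ?_⟩
  intro h
  have hx := h (fun j => (1/2:ℝ) ^ (j : ℕ))
  have hx2 : (0:ℝ) ≤ ∑ idx : Fin m → Fin n, (Mten n m idx - 2 * Nten n m idx) *
      ∏ k, ((1 / 2 : ℝ)) ^ ((idx k : ℕ)) := hx
  linarith
end

section
/- The Sup-MO value for m = 2 equals 2: the matrix M(n,2) - 2N(n,2) (the Moler matrix) is positive semi-definite for all n, but for any α > 2 there exists n such that M(n,2) - α N(n,2) is not positive semi-definite. -/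
open Matrix

noncomputable def Mmat (n : ℕ) : Matrix (Fin n) (Fin n) ℝ :=
  fun i j => if i = j then ((i : ℕ) + 1 : ℝ) else ((min (i : ℕ) (j : ℕ) : ℝ) + 1)

noncomputable def Nmat (n : ℕ) : Matrix (Fin n) (Fin n) ℝ :=
  fun i j => if i = j then 0 else 1

/-! Write `Q_α(x) = x ⬝ᵥ (M - α N) x`. Splitting off the first coordinate of `x = (a, y)` and
writing `s = ∑ yᵢ`, one has `Q_α(a, y) = (a + s)² - 2α a s + Q_α(y)`, because `M(n+1)` is the
all-ones matrix plus `M(n)` on the last `n` coordinates and `N` is all-ones minus the identity.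
For `α = 2` the new term is `(a - s)²`, so `Q₂ ≥ 0` by induction on `n`. For `α > 2` choose
`a = s` at every step, i.e. `x = (2ⁿ⁻¹, …, 2, 1, 1)`: each step adds `(4 - 2α) s² ≤ 4 - 2α < 0`,
so `Q_α(x)` eventually becomes negative. -/

lemma Mmat_apply {n : ℕ} (i j : Fin n) : Mmat n i j = ((min (i : ℕ) (j : ℕ) : ℕ) : ℝ) + 1 := by
  unfold Mmat
  split_ifs with h
  · simp [h]
  · push_cast; rfl

@[simp] lemma Mmat_zero_left {n : ℕ} (j : Fin (n + 1)) : Mmat (n + 1) 0 j = 1 := by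
  simp [Mmat_apply]

@[simp] lemma Mmat_zero_right {n : ℕ} (i : Fin (n + 1)) : Mmat (n + 1) i 0 = 1 := by
  simp [Mmat_apply]

@[simp] lemma Mmat_succ_succ {n : ℕ} (i j : Fin n) :
    Mmat (n + 1) i.succ j.succ = Mmat n i j + 1 := by
  simp only [Mmat_apply, Fin.val_succ, Nat.succ_min_succ, Nat.cast_succ]

lemma cons_dotProduct_Mmat_mulVec_cons {n : ℕ} (a : ℝ) (y : Fin n → ℝ) :
    Fin.cons a y ⬝ᵥ Mmat (n + 1) *ᵥ Fin.cons a y = (a + ∑ i, y i) ^ 2 + y ⬝ᵥ Mmat n *ᵥ y := by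
  simp only [dotProduct, mulVec, Fin.sum_univ_succ, Fin.cons_zero, Fin.cons_succ, Mmat_zero_left,
    Mmat_zero_right, Mmat_succ_succ, one_mul, mul_add, add_mul, Finset.sum_add_distrib,
    ← Finset.sum_mul]
  ring

lemma Nmat_eq (n : ℕ) : Nmat n = of (fun _ _ => 1) - 1 := by
  ext i j
  by_cases h : i = j <;> simp [Nmat, h, one_apply]

lemma dotProduct_Nmat_mulVec {n : ℕ} (x : Fin n → ℝ) :
    x ⬝ᵥ Nmat n *ᵥ x = (∑ i, x i) ^ 2 - x ⬝ᵥ x := by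
  rw [Nmat_eq, sub_mulVec, one_mulVec, dotProduct_sub, sq, Finset.sum_mul_sum]
  simp [dotProduct, mulVec, Finset.mul_sum]

noncomputable def moForm (α : ℝ) {n : ℕ} (x : Fin n → ℝ) : ℝ :=
  x ⬝ᵥ (Mmat n - α • Nmat n) *ᵥ x

lemma moForm_cons (α a : ℝ) {n : ℕ} (y : Fin n → ℝ) :
    moForm α (Fin.cons a y : Fin (n + 1) → ℝ) =
      (a + ∑ i, y i) ^ 2 - 2 * α * a * ∑ i, y i + moForm α y := by
  simp only [moForm, sub_mulVec, smul_mulVec, dotProduct_sub, dotProduct_smul, smul_eq_mul,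
    cons_dotProduct_Mmat_mulVec_cons, dotProduct_Nmat_mulVec, Fin.sum_cons]
  simp only [dotProduct, Fin.sum_univ_succ, Fin.cons_zero, Fin.cons_succ]
  ring

theorem moForm_two_nonneg : ∀ {n : ℕ} (x : Fin n → ℝ), 0 ≤ moForm 2 x
  | 0, x => by simp [moForm]
  | n + 1, x => by
    rw [← Fin.cons_self_tail x, moForm_cons]
    have htail := moForm_two_nonneg (Fin.tail x)
    nlinarith [sq_nonneg (x 0 - ∑ i, Fin.tail x i)]

noncomputable def doublingVec : (n : ℕ) → Fin (n + 1) → ℝ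
  | 0 => fun _ => 1
  | n + 1 => Fin.cons (∑ i, doublingVec n i) (doublingVec n)

lemma sum_doublingVec (n : ℕ) : ∑ i, doublingVec n i = 2 ^ n := by
  induction n with
  | zero => simp [doublingVec]
  | succ n ih => rw [doublingVec, Fin.sum_cons, ih, pow_succ]; ring

lemma moForm_doublingVec_le {α : ℝ} (hα : 2 ≤ α) (n : ℕ) :
    moForm α (doublingVec n) ≤ 1 - (2 * α - 4) * n := by
  induction n with
  | zero => simp [moForm, doublingVec, dotProduct, mulVec, Nmat]
  | succ n ih =>
    rw [doublingVec, moForm_cons, sum_doublingVec]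
    have hsq : 2 * α - 4 ≤ (2 * α - 4) * ((2 : ℝ) ^ n) ^ 2 :=
      le_mul_of_one_le_right (by linarith) (one_le_pow₀ (one_le_pow₀ one_le_two))
    push_cast
    linarith

theorem supMO_value_two_for_matrices :
    (∀ (n : ℕ) (x : Fin n → ℝ), 0 ≤ x ⬝ᵥ (Mmat n - (2 : ℝ) • Nmat n).mulVec x) ∧
    (∀ α : ℝ, 2 < α →
      ∃ (n : ℕ) (x : Fin n → ℝ), x ⬝ᵥ (Mmat n - α • Nmat n).mulVec x < 0) := by
  refine ⟨fun n x => moForm_two_nonneg x, fun α hα => ?_⟩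
  obtain ⟨n, hn⟩ := exists_nat_gt (2 * α - 4)⁻¹
  refine ⟨n + 1, doublingVec n, ?_⟩
  have hgap : 1 < (2 * α - 4) * n := by
    rwa [inv_lt_iff_one_lt_mul₀' (by linarith)] at hn
  show moForm α (doublingVec n) < 0
  linarith [moForm_doublingVec_le hα.le n]
end
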